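/- arXiv:2503.24161 — 2 statements merged into one kernel-verified Lean document; each statement's English description precedes it below -/
import Mathlib

section
/- Let 𝔤 = V₁ ⊕ ⋯ ⊕ V_s be a stratified real Lie algebra of step s ≥ 2 and let k ≥ 0 be an integer. Let 𝔤³ = [𝔤,[𝔤,𝔤]] be the third term of the lower central series of 𝔤, so that the quotient 𝔤/𝔤³ is a stratified Lie algebra of step 2 with strata the images of V₁ and V₂. Then 𝔤 is hypergenerated of order k if and only if 𝔤/𝔤³ is hypergenerated of order k. -/
/-- The submodule of a Lie algebra spanned by brackets of elements of two submodules. -/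
def bracketSpan {L : Type*} [LieRing L] [LieAlgebra ℝ L] (A B : Submodule ℝ L) :
    Submodule ℝ L :=
  Submodule.span ℝ {z | ∃ x ∈ A, ∃ y ∈ B, ⁅x, y⁆ = z}

/-- The commutator submodule `[𝔤, 𝔤]` of a Lie algebra. -/
def commutatorSubmodule (L : Type*) [LieRing L] [LieAlgebra ℝ L] : Submodule ℝ L :=
  bracketSpan (⊤ : Submodule ℝ L) ⊤

/-- A family `V` of submodules of a real Lie algebra `L` is a stratification of step `s` if
`L = V 1 ⊕ ⋯ ⊕ V s`, `[V 1, V (i-1)] = V i` for `2 ≤ i ≤ s`, `V s ≠ 0` and `[V 1, V s] = 0`.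
We also require `V i = 0` for `i = 0` and `i > s`. -/
structure IsStratification (L : Type*) [LieRing L] [LieAlgebra ℝ L]
    (V : ℕ → Submodule ℝ L) (s : ℕ) : Prop where
  one_le_step : 1 ≤ s
  isInternal : DirectSum.IsInternal (fun i : Fin s => V (i.1 + 1))
  bracket_eq : ∀ i, 2 ≤ i → i ≤ s → bracketSpan (V 1) (V (i - 1)) = V i
  last_ne_bot : V s ≠ ⊥
  bracket_last_eq_bot : bracketSpan (V 1) (V s) = ⊥
  zero_eq_bot : V 0 = ⊥
  eq_bot_of_gt : ∀ i, s < i → V i = ⊥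

/-- A stratified real Lie algebra with strata `V` and rank `m = dim (V 1)` is hypergenerated of
order `k` if every subspace `P ⊆ V 1` with `dim P = m - k` satisfies `[𝔤,𝔤] ⊆ Lie(P)`. -/
def IsHypergenerated (L : Type*) [LieRing L] [LieAlgebra ℝ L]
    (V : ℕ → Submodule ℝ L) (k : ℕ) : Prop :=
  ∀ P : Submodule ℝ L, P ≤ V 1 →
    Module.finrank ℝ P = Module.finrank ℝ (V 1) - k →
    commutatorSubmodule L ≤ (LieSubalgebra.lieSpan ℝ L (P : Set L)).toSubmodule

/-!
Write `U h = V (h+1) ⊕ V (h+2) ⊕ ⋯` (`strataAbove V h`). The grading `[V i, V j] ⊆ V (i+j)`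
shows that `U h` is the term `𝔤^{h+1}` of the lower central series (Mathlib's
`lowerCentralSeries ℝ L L h`), so the quotient map `π : 𝔤 → 𝔤/𝔤³` has kernel `U 2` and is
injective on `V 1`. This makes `𝔤/𝔤³` stratified, and subspaces `P ⊆ V 1` correspond to
subspaces of `π(V 1)` of the same dimension.

As `π` maps `Lie(P)` onto `Lie(π P)`, hypergeneration passes to the quotient. Conversely,
`π(V 2) ⊆ Lie(π P)` means `V 2 ⊆ Lie(P) + U 2`; since `Lie(P) ⊆ P + [P,P] + U 2`, comparing
components in `V 2` gives `V 2 = [P,P] ⊆ Lie(P)`. For `x ∈ V 1` the derivation `ad x` then maps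
`P` into `V 2 ⊆ Lie(P)`, hence preserves `Lie(P)`, and `V (n+1) = [V 1, V n]` puts every
higher stratum into `Lie(P)`.
-/

section bracketSpan

variable {L : Type*} [LieRing L] [LieAlgebra ℝ L] {A B C : Submodule ℝ L}

theorem lie_mem_bracketSpan {x y : L} (hx : x ∈ A) (hy : y ∈ B) : ⁅x, y⁆ ∈ bracketSpan A B :=
  Submodule.subset_span ⟨x, hx, y, hy, rfl⟩

theorem bracketSpan_le_iff : bracketSpan A B ≤ C ↔ ∀ x ∈ A, ∀ y ∈ B, ⁅x, y⁆ ∈ C := by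
  refine Submodule.span_le.trans ⟨fun h x hx y hy => h ⟨x, hx, y, hy, rfl⟩, ?_⟩
  rintro h _ ⟨x, hx, y, hy, rfl⟩
  exact h x hx y hy

theorem bracketSpan_mono {A' B' : Submodule ℝ L} (hA : A ≤ A') (hB : B ≤ B') :
    bracketSpan A B ≤ bracketSpan A' B' :=
  bracketSpan_le_iff.2 fun _ hx _ hy => lie_mem_bracketSpan (hA hx) (hB hy)

theorem bracketSpan_comm : bracketSpan A B = bracketSpan B A := by
  have key : ∀ X Y : Submodule ℝ L, bracketSpan X Y ≤ bracketSpan Y X := fun X Y =>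
    bracketSpan_le_iff.2 fun x hx y hy => by
      rw [← lie_skew]; exact neg_mem (lie_mem_bracketSpan hy hx)
  exact (key A B).antisymm (key B A)

@[simp]
theorem bracketSpan_bot_left : bracketSpan ⊥ B = ⊥ :=
  le_bot_iff.1 <| bracketSpan_le_iff.2 fun x hx _ _ => by simp [(Submodule.mem_bot ℝ).1 hx]

@[simp]
theorem bracketSpan_bot_right : bracketSpan A ⊥ = ⊥ := by
  rw [bracketSpan_comm, bracketSpan_bot_left]

theorem bracketSpan_iSup_left_le {ι : Sort*} (A : ι → Submodule ℝ L) :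
    bracketSpan (⨆ i, A i) B ≤ ⨆ i, bracketSpan (A i) B := by
  refine bracketSpan_le_iff.2 fun x hx y hy => ?_
  induction hx using Submodule.iSup_induction' with
  | mem i x hx => exact Submodule.mem_iSup_of_mem i (lie_mem_bracketSpan hx hy)
  | zero => simp
  | add x x' _ _ hx hx' => rw [add_lie]; exact add_mem hx hx'

theorem bracketSpan_iSup_right_le {ι : Sort*} (B : ι → Submodule ℝ L) :
    bracketSpan A (⨆ i, B i) ≤ ⨆ i, bracketSpan A (B i) := by
  simpa only [bracketSpan_comm (A := A)] using bracketSpan_iSup_left_le B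

theorem bracketSpan_sup_le_sup :
    bracketSpan (A ⊔ B) (A ⊔ B) ≤ bracketSpan A A ⊔ bracketSpan ⊤ B := by
  refine bracketSpan_le_iff.2 fun x hx y hy => ?_
  obtain ⟨a, ha, b, hb, rfl⟩ := Submodule.mem_sup.1 hx
  obtain ⟨a', ha', b', hb', rfl⟩ := Submodule.mem_sup.1 hy
  have hba : ⁅b, a' + b'⁆ ∈ bracketSpan ⊤ B := by
    rw [← lie_skew]; exact neg_mem (lie_mem_bracketSpan trivial hb)
  rw [add_lie, lie_add]
  exact add_mem (add_mem (Submodule.mem_sup_left (lie_mem_bracketSpan ha ha'))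
    (Submodule.mem_sup_right (lie_mem_bracketSpan trivial hb'))) (Submodule.mem_sup_right hba)

theorem bracketSpan_bracketSpan_le :
    bracketSpan (bracketSpan A B) C ≤
      bracketSpan A (bracketSpan B C) ⊔ bracketSpan B (bracketSpan A C) := by
  refine bracketSpan_le_iff.2 fun x hx z hz => ?_
  induction hx using Submodule.span_induction with
  | mem x hx =>
    obtain ⟨a, ha, b, hb, rfl⟩ := hx
    rw [lie_lie]
    exact sub_mem (Submodule.mem_sup_left (lie_mem_bracketSpan ha (lie_mem_bracketSpan hb hz)))
      (Submodule.mem_sup_right (lie_mem_bracketSpan hb (lie_mem_bracketSpan ha hz)))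
  | zero => simp
  | add x x' _ _ hx hx' => rw [add_lie]; exact add_mem hx hx'
  | smul t x _ hx => rw [smul_lie]; exact Submodule.smul_mem _ t hx

theorem map_bracketSpan {L' : Type*} [LieRing L'] [LieAlgebra ℝ L'] (f : L →ₗ⁅ℝ⁆ L')
    (A B : Submodule ℝ L) :
    (bracketSpan A B).map (f : L →ₗ[ℝ] L') =
      bracketSpan (A.map (f : L →ₗ[ℝ] L')) (B.map (f : L →ₗ[ℝ] L')) := by
  rw [bracketSpan, Submodule.map_span, bracketSpan]
  congr 1
  ext z
  constructor
  · rintro ⟨_, ⟨x, hx, y, hy, rfl⟩, rfl⟩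
    exact ⟨f x, ⟨x, hx, rfl⟩, f y, ⟨y, hy, rfl⟩, (f.map_lie x y).symm⟩
  · rintro ⟨_, ⟨x, hx, rfl⟩, _, ⟨y, hy, rfl⟩, rfl⟩
    exact ⟨⁅x, y⁆, ⟨x, hx, y, hy, rfl⟩, f.map_lie x y⟩

theorem lieSpan_le_of_bracketSpan_le {S : Set L} (hA : bracketSpan A A ≤ A) (hS : S ⊆ A) :
    (LieSubalgebra.lieSpan ℝ L S).toSubmodule ≤ A :=
  LieSubalgebra.lieSpan_le
    (K := { A with lie_mem' := fun hx hy => hA (lie_mem_bracketSpan hx hy) }) |>.2 hS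

theorem lowerCentralSeries_succ_toSubmodule (h : ℕ) :
    (LieModule.lowerCentralSeries ℝ L L (h + 1)).toSubmodule =
      bracketSpan ⊤ (LieModule.lowerCentralSeries ℝ L L h).toSubmodule := by
  rw [LieModule.lowerCentralSeries_succ, LieSubmodule.lieIdeal_oper_eq_linear_span', bracketSpan]
  rfl

theorem commutatorSubmodule_eq_lowerCentralSeries_one :
    commutatorSubmodule L = (LieModule.lowerCentralSeries ℝ L L 1).toSubmodule := by
  rw [lowerCentralSeries_succ_toSubmodule, LieModule.lowerCentralSeries_zero]
  rfl

end bracketSpan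

theorem LieSubalgebra.lie_mem_lieSpan_of_forall_lie_mem {R L : Type*} [CommRing R] [LieRing L]
    [LieAlgebra R L] {S : Set L} {x y : L} (hS : ∀ z ∈ S, ⁅x, z⁆ ∈ lieSpan R L S)
    (hy : y ∈ lieSpan R L S) : ⁅x, y⁆ ∈ lieSpan R L S := by
  induction hy using lieSpan_induction with
  | mem z hz => exact hS z hz
  | zero => simp
  | add z z' _ _ hz hz' => rw [lie_add]; exact add_mem hz hz'
  | smul t z _ hz => rw [lie_smul]; exact SMulMemClass.smul_mem t hz
  | lie z z' hz hz' h h' => rw [leibniz_lie]; exact add_mem (lie_mem _ h hz') (lie_mem _ hz h')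

def LieSubmodule.Quotient.mkLieHom {R L : Type*} [CommRing R] [LieRing L] [LieAlgebra R L]
    (I : LieIdeal R L) : L →ₗ⁅R⁆ L ⧸ I :=
  { (LieSubmodule.Quotient.mk' I : L →ₗ[R] L ⧸ I) with
    map_lie' := fun {x y} => LieSubmodule.Quotient.mk_bracket (I := I) x y }

theorem Submodule.finrank_map_of_disjoint_ker {R M M' : Type*} [Ring R] [AddCommGroup M]
    [Module R M] [AddCommGroup M'] [Module R M'] (f : M →ₗ[R] M') {A : Submodule R M}
    (hA : Disjoint A (LinearMap.ker f)) : Module.finrank R (A.map f) = Module.finrank R A := by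
  rw [← LinearMap.range_domRestrict]
  exact LinearMap.finrank_range_of_inj (LinearMap.injective_domRestrict_iff.2 hA)

section Quotient

variable {L : Type*} [LieRing L] [LieAlgebra ℝ L] (I : LieIdeal ℝ L)

theorem map_mk_bracketSpan (A B : Submodule ℝ L) :
    (bracketSpan A B).map (LieSubmodule.Quotient.mk' I).toLinearMap =
      bracketSpan (A.map (LieSubmodule.Quotient.mk' I).toLinearMap)
        (B.map (LieSubmodule.Quotient.mk' I).toLinearMap) :=
  map_bracketSpan (LieSubmodule.Quotient.mkLieHom I) A B

theorem map_mk_lieSpan (P : Submodule ℝ L) :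
    (LieSubalgebra.lieSpan ℝ L (P : Set L)).toSubmodule.map
        (LieSubmodule.Quotient.mk' I).toLinearMap =
      (LieSubalgebra.lieSpan ℝ (L ⧸ I)
        (P.map (LieSubmodule.Quotient.mk' I).toLinearMap : Set (L ⧸ I))).toSubmodule := by
  rw [Submodule.map_coe]
  exact congrArg LieSubalgebra.toSubmodule
    (LieSubalgebra.map_lieSpan (f := LieSubmodule.Quotient.mkLieHom I))

theorem commutatorSubmodule_quotient :
    commutatorSubmodule (L ⧸ I) =
      (commutatorSubmodule L).map (LieSubmodule.Quotient.mk' I).toLinearMap := by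
  rw [commutatorSubmodule, commutatorSubmodule, map_mk_bracketSpan, Submodule.map_top,
    LinearMap.range_eq_top.2 (LieSubmodule.Quotient.surjective_mk' I)]

end Quotient

section Stratification

variable {L : Type*} [LieRing L] [LieAlgebra ℝ L] {V : ℕ → Submodule ℝ L} {s : ℕ}

def strataAbove (V : ℕ → Submodule ℝ L) (h : ℕ) : Submodule ℝ L :=
  ⨆ i, V (h + 1 + i)

theorem le_strataAbove {h i : ℕ} (hi : h < i) : V i ≤ strataAbove V h := by
  obtain ⟨j, rfl⟩ := Nat.exists_eq_add_of_le hi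
  exact le_iSup (fun j => V (h + 1 + j)) j

theorem strataAbove_eq_sup (h : ℕ) : strataAbove V h = V (h + 1) ⊔ strataAbove V (h + 1) := by
  refine le_antisymm (iSup_le fun i => ?_) (sup_le (le_strataAbove (by omega))
    (iSup_le fun i => le_strataAbove (by omega)))
  rcases i with _ | i
  · exact le_sup_left
  · exact le_sup_of_le_right (le_strataAbove (by omega))

theorem strataAbove_succ_le {h : ℕ} : strataAbove V (h + 1) ≤ strataAbove V h :=
  le_sup_right.trans (strataAbove_eq_sup h).ge

namespace IsStratification

variable (hst : IsStratification L V s) {P : Submodule ℝ L}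
include hst

theorem bracketSpan_one_le (i : ℕ) : bracketSpan (V 1) (V i) ≤ V (i + 1) := by
  obtain rfl | hi := Nat.eq_zero_or_pos i
  · simp [hst.zero_eq_bot]
  obtain his | rfl | hsi := lt_trichotomy i s
  · simpa using (hst.bracket_eq (i + 1) (by omega) his).le
  · simp [hst.bracket_last_eq_bot]
  · simp [hst.eq_bot_of_gt i hsi]

theorem le_bracketSpan_one {i : ℕ} (hi : 1 ≤ i) : V (i + 1) ≤ bracketSpan (V 1) (V i) := by
  by_cases his : i + 1 ≤ s
  · simpa using (hst.bracket_eq (i + 1) (by omega) his).ge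
  · simp [hst.eq_bot_of_gt (i + 1) (by omega)]

theorem bracketSpan_le_add (i j : ℕ) : bracketSpan (V i) (V j) ≤ V (i + j) := by
  induction i generalizing j with
  | zero => simp [hst.zero_eq_bot]
  | succ i ih =>
    obtain rfl | hi := Nat.eq_zero_or_pos i
    · simpa [add_comm] using hst.bracketSpan_one_le j
    calc bracketSpan (V (i + 1)) (V j)
        ≤ bracketSpan (bracketSpan (V 1) (V i)) (V j) :=
          bracketSpan_mono (hst.le_bracketSpan_one hi) le_rfl
      _ ≤ bracketSpan (V 1) (bracketSpan (V i) (V j)) ⊔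
            bracketSpan (V i) (bracketSpan (V 1) (V j)) := bracketSpan_bracketSpan_le
      _ ≤ bracketSpan (V 1) (V (i + j)) ⊔ bracketSpan (V i) (V (j + 1)) :=
          sup_le_sup (bracketSpan_mono le_rfl (ih j))
            (bracketSpan_mono le_rfl (hst.bracketSpan_one_le j))
      _ ≤ V (i + 1 + j) := by
          rw [add_right_comm]
          exact sup_le (hst.bracketSpan_one_le _) (add_assoc i j 1 ▸ ih (j + 1))

theorem two_ne_bot (hs : 2 ≤ s) : V 2 ≠ ⊥ := by
  intro h2
  have hbot : ∀ n, V (n + 2) = ⊥ := by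
    intro n
    induction n with
    | zero => exact h2
    | succ n ih =>
      refine le_bot_iff.1 ((hst.le_bracketSpan_one (by omega)).trans ?_)
      rw [ih, bracketSpan_bot_right]
  exact hst.last_ne_bot (by simpa [Nat.sub_add_cancel hs] using hbot (s - 2))

theorem iSupIndep : iSupIndep V := by
  have hpos : ∀ i, V i ≠ ⊥ → 1 ≤ i ∧ i ≤ s := fun i hi =>
    ⟨Nat.pos_of_ne_zero fun h0 => hi (h0 ▸ hst.zero_eq_bot),
      not_lt.1 fun h => hi (hst.eq_bot_of_gt i h)⟩
  let f : {i // V i ≠ ⊥} → Fin s := fun i => ⟨i.1 - 1, by have := hpos i.1 i.2; omega⟩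
  have hf : Function.Injective f := fun i j hij => by
    have := hpos i.1 i.2; have := hpos j.1 j.2
    simp only [f, Fin.mk.injEq] at hij
    exact Subtype.ext (by omega)
  rw [← iSupIndep_ne_bot]
  convert hst.isInternal.submodule_iSupIndep.comp hf using 2 with i
  simp only [Function.comp_apply, f]
  congr
  have := hpos i.1 i.2
  omega

theorem strataAbove_zero : strataAbove V 0 = ⊤ := by
  refine eq_top_iff.2 (hst.isInternal.submodule_iSup_eq_top.ge.trans (iSup_le fun i => ?_))
  exact le_strataAbove (by omega)

theorem disjoint_strataAbove (i : ℕ) : Disjoint (V i) (strataAbove V i) :=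
  (hst.iSupIndep i).mono_right (iSup_le fun j => le_iSup₂_of_le (i + 1 + j) (by omega) le_rfl)

theorem disjoint_sup_strataAbove {i j : ℕ} (hij : i < j) :
    Disjoint (V j) (V i ⊔ strataAbove V j) :=
  (hst.iSupIndep j).mono_right <| sup_le (le_iSup₂_of_le i hij.ne le_rfl)
    (iSup_le fun l => le_iSup₂_of_le (j + 1 + l) (by omega) le_rfl)

theorem bracketSpan_strataAbove_le (a b : ℕ) :
    bracketSpan (strataAbove V a) (strataAbove V b) ≤ strataAbove V (a + b + 1) := by
  refine (bracketSpan_iSup_left_le _).trans (iSup_le fun i => ?_)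
  refine (bracketSpan_iSup_right_le _).trans (iSup_le fun j => ?_)
  exact (hst.bracketSpan_le_add _ _).trans (le_strataAbove (by omega))

theorem lowerCentralSeries_eq_strataAbove (h : ℕ) :
    (LieModule.lowerCentralSeries ℝ L L h).toSubmodule = strataAbove V h := by
  induction h with
  | zero => rw [LieModule.lowerCentralSeries_zero, hst.strataAbove_zero]; rfl
  | succ h ih =>
    rw [lowerCentralSeries_succ_toSubmodule, ih, ← hst.strataAbove_zero]
    refine le_antisymm (by simpa [add_comm] using hst.bracketSpan_strataAbove_le 0 h)
      (iSup_le fun i => ?_)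
    rw [show h + 1 + 1 + i = h + 1 + i + 1 by omega]
    exact (hst.le_bracketSpan_one (by omega)).trans
      (bracketSpan_mono (le_strataAbove (by omega)) (le_strataAbove (by omega)))

theorem commutatorSubmodule_eq : commutatorSubmodule L = strataAbove V 1 := by
  rw [commutatorSubmodule_eq_lowerCentralSeries_one, hst.lowerCentralSeries_eq_strataAbove]

theorem ker_mk_lowerCentralSeries_two :
    LinearMap.ker (LieSubmodule.Quotient.mk' (LieModule.lowerCentralSeries ℝ L L 2)).toLinearMap =
      strataAbove V 2 := by
  rw [← hst.lowerCentralSeries_eq_strataAbove]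
  ext
  simp

theorem quotient_lowerCentralSeries_two (hs : 2 ≤ s) :
    IsStratification (L ⧸ LieModule.lowerCentralSeries ℝ L L 2)
      (fun i => (V i).map
        (LieSubmodule.Quotient.mk' (LieModule.lowerCentralSeries ℝ L L 2)).toLinearMap) 2 := by
  set π := (LieSubmodule.Quotient.mk' (LieModule.lowerCentralSeries ℝ L L 2)).toLinearMap
  have hker : LinearMap.ker π = strataAbove V 2 := hst.ker_mk_lowerCentralSeries_two
  have hkill {A : Submodule ℝ L} (hA : A ≤ strataAbove V 2) : A.map π = ⊥ :=
    LinearMap.le_ker_iff_map.1 (hker ▸ hA)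
  have hU : strataAbove V 1 = V 2 ⊔ strataAbove V 2 := strataAbove_eq_sup 1
  refine ⟨by norm_num, ?_, ?_, ?_, ?_, ?_, ?_⟩
  · refine DirectSum.isInternal_submodule_of_iSupIndep_of_iSup_eq_top
      ((iSupIndep_pair (i := 0) (j := 1) (by decide) fun k => by fin_cases k <;> simp).2 ?_) ?_
    · exact (Submodule.disjoint_map_of_ker_le_right (hst.disjoint_strataAbove 1)
        (hker ▸ hU ▸ le_sup_right)).mono_right (Submodule.map_mono (hU ▸ le_sup_left))
    · have hcover : V 1 ⊔ V 2 ⊔ strataAbove V 2 = ⊤ := by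
        rw [sup_assoc, ← hU, ← hst.strataAbove_zero]
        exact (strataAbove_eq_sup 0).symm
      have htop : (V 1).map π ⊔ (V 2).map π = ⊤ := by
        rw [← sup_bot_eq ((V 1).map π ⊔ (V 2).map π), ← hkill le_rfl, ← Submodule.map_sup,
          ← Submodule.map_sup, hcover, Submodule.map_top,
          LinearMap.range_eq_top.2 (LieSubmodule.Quotient.surjective_mk' _)]
      exact eq_top_iff.2 (htop.ge.trans (sup_le (le_iSup_of_le 0 le_rfl) (le_iSup_of_le 1 le_rfl)))
  · intro i hi hi'
    obtain rfl : i = 2 := by omega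
    simp only [← hst.bracket_eq 2 le_rfl hs]
    exact (map_mk_bracketSpan _ _ _).symm
  · intro h2
    refine hst.two_ne_bot hs ((hst.disjoint_strataAbove 2).eq_bot_of_le ?_)
    exact hker ▸ LinearMap.le_ker_iff_map.2 h2
  · exact (map_mk_bracketSpan _ _ _).symm.trans
      (hkill ((hst.bracketSpan_one_le 2).trans (le_strataAbove (by norm_num))))
  · simp [hst.zero_eq_bot]
  · exact fun i hi => hkill (le_strataAbove hi)

theorem lieSpan_le_sup_bracketSpan_sup (hP : P ≤ V 1) :
    (LieSubalgebra.lieSpan ℝ L (P : Set L)).toSubmodule ≤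
      P ⊔ (bracketSpan P P ⊔ strataAbove V 2) := by
  have hY : bracketSpan P P ⊔ strataAbove V 2 ≤ strataAbove V 1 :=
    sup_le ((bracketSpan_mono hP hP).trans ((hst.bracketSpan_one_le 1).trans
      (le_strataAbove one_lt_two))) strataAbove_succ_le
  have hTop : bracketSpan ⊤ (bracketSpan P P ⊔ strataAbove V 2) ≤ strataAbove V 2 := by
    rw [← hst.strataAbove_zero]
    exact (bracketSpan_mono le_rfl hY).trans (hst.bracketSpan_strataAbove_le 0 1)
  refine lieSpan_le_of_bracketSpan_le ?_ (SetLike.coe_subset_coe.2 le_sup_left)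
  exact bracketSpan_sup_le_sup.trans ((sup_le_sup_left hTop _).trans le_sup_right)

theorem two_eq_bracketSpan_of_le_sup (hP : P ≤ V 1)
    (h : V 2 ≤ (LieSubalgebra.lieSpan ℝ L (P : Set L)).toSubmodule ⊔ strataAbove V 2) :
    V 2 = bracketSpan P P := by
  have hPP : bracketSpan P P ≤ V 2 := (bracketSpan_mono hP hP).trans (hst.bracketSpan_one_le 1)
  have hV2 : V 2 ≤ bracketSpan P P ⊔ (P ⊔ strataAbove V 2) := by
    refine h.trans (sup_le ((hst.lieSpan_le_sup_bracketSpan_sup hP).trans ?_) ?_)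
    · exact sup_le (le_sup_of_le_right le_sup_left)
        (sup_le le_sup_left (le_sup_of_le_right le_sup_right))
    · exact le_sup_of_le_right le_sup_right
  have hdisj : (P ⊔ strataAbove V 2) ⊓ V 2 = ⊥ :=
    ((hst.disjoint_sup_strataAbove one_lt_two).mono_right (sup_le_sup_right hP _)).symm.eq_bot
  calc V 2 = (bracketSpan P P ⊔ (P ⊔ strataAbove V 2)) ⊓ V 2 := (inf_eq_right.2 hV2).symm
    _ = bracketSpan P P := by rw [sup_inf_assoc_of_le _ hPP, hdisj, sup_bot_eq]

theorem commutatorSubmodule_le_lieSpan (hP : P ≤ V 1) (h : V 2 ≤ bracketSpan P P) :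
    commutatorSubmodule L ≤ (LieSubalgebra.lieSpan ℝ L (P : Set L)).toSubmodule := by
  set H := LieSubalgebra.lieSpan ℝ L (P : Set L)
  have hV2 : V 2 ≤ H.toSubmodule := h.trans <| bracketSpan_le_iff.2 fun x hx y hy =>
    H.lie_mem (LieSubalgebra.subset_lieSpan hx) (LieSubalgebra.subset_lieSpan hy)
  have hnorm : bracketSpan (V 1) H.toSubmodule ≤ H.toSubmodule :=
    bracketSpan_le_iff.2 fun x hx y hy =>
      LieSubalgebra.lie_mem_lieSpan_of_forall_lie_mem (fun z hz =>
        hV2 (hst.bracketSpan_one_le 1 (lie_mem_bracketSpan hx (hP hz)))) hy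
  have hVH : ∀ n, V (n + 2) ≤ H.toSubmodule := by
    intro n
    induction n with
    | zero => exact hV2
    | succ n ih =>
      exact (hst.le_bracketSpan_one (by omega)).trans ((bracketSpan_mono le_rfl ih).trans hnorm)
  rw [hst.commutatorSubmodule_eq]
  exact iSup_le fun i => (add_comm (1 + 1) i ▸ hVH i)

theorem finrank_map_mk_of_le (hP : P ≤ V 1) :
    Module.finrank ℝ
        (P.map (LieSubmodule.Quotient.mk' (LieModule.lowerCentralSeries ℝ L L 2)).toLinearMap) =
      Module.finrank ℝ P := by
  refine Submodule.finrank_map_of_disjoint_ker _ ((hst.disjoint_strataAbove 1).mono hP ?_)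
  exact hst.ker_mk_lowerCentralSeries_two.le.trans strataAbove_succ_le

theorem isHypergenerated_quotient {k : ℕ} (h : IsHypergenerated L V k) :
    IsHypergenerated (L ⧸ LieModule.lowerCentralSeries ℝ L L 2)
      (fun i => (V i).map
        (LieSubmodule.Quotient.mk' (LieModule.lowerCentralSeries ℝ L L 2)).toLinearMap) k := by
  intro P' hP' hrank
  set π := (LieSubmodule.Quotient.mk' (LieModule.lowerCentralSeries ℝ L L 2)).toLinearMap
  have hmap : (V 1 ⊓ P'.comap π).map π = P' := by
    rw [← Submodule.map_inf_eq_map_inf_comap, inf_eq_right.2 hP']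
  rw [commutatorSubmodule_quotient, ← hmap, ← map_mk_lieSpan]
  refine Submodule.map_mono (h _ inf_le_left ?_)
  rw [← hst.finrank_map_mk_of_le inf_le_left, hmap, hrank, hst.finrank_map_mk_of_le le_rfl]

theorem isHypergenerated_of_quotient (hs : 2 ≤ s) {k : ℕ}
    (h : IsHypergenerated (L ⧸ LieModule.lowerCentralSeries ℝ L L 2)
      (fun i => (V i).map
        (LieSubmodule.Quotient.mk' (LieModule.lowerCentralSeries ℝ L L 2)).toLinearMap) k) :
    IsHypergenerated L V k := by
  intro P hP hrank
  set π := (LieSubmodule.Quotient.mk' (LieModule.lowerCentralSeries ℝ L L 2)).toLinearMap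
  have hcomm := h (P.map π) (Submodule.map_mono hP) (by
    rw [hst.finrank_map_mk_of_le hP, hst.finrank_map_mk_of_le le_rfl, hrank])
  have hV2 : (V 2).map π ≤ (LieSubalgebra.lieSpan ℝ L (P : Set L)).toSubmodule.map π := by
    rw [map_mk_lieSpan, ← (hst.bracket_eq 2 le_rfl hs), map_mk_bracketSpan]
    exact (bracketSpan_mono le_top le_top).trans hcomm
  rw [Submodule.map_le_iff_le_comap, Submodule.comap_map_eq,
    hst.ker_mk_lowerCentralSeries_two] at hV2
  exact hst.commutatorSubmodule_le_lieSpan hP (hst.two_eq_bracketSpan_of_le_sup hP hV2).le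

end IsStratification

end Stratification

theorem hypergenerated_iff_quotient_lcs3_general {L : Type*} [LieRing L] [LieAlgebra ℝ L]
    (V : ℕ → Submodule ℝ L) (s : ℕ) (hs : 2 ≤ s)
    (hst : IsStratification L V s) (k : ℕ) :
    IsStratification (L ⧸ LieModule.lowerCentralSeries ℝ L L 2)
        (fun i => (V i).map
          (LieSubmodule.Quotient.mk' (LieModule.lowerCentralSeries ℝ L L 2)).toLinearMap) 2 ∧
      (IsHypergenerated L V k ↔
        IsHypergenerated (L ⧸ LieModule.lowerCentralSeries ℝ L L 2)
          (fun i => (V i).map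
            (LieSubmodule.Quotient.mk' (LieModule.lowerCentralSeries ℝ L L 2)).toLinearMap) k) :=
  ⟨hst.quotient_lowerCentralSeries_two hs,
    hst.isHypergenerated_quotient, hst.isHypergenerated_of_quotient hs⟩

/-- Let `𝔤 = V₁ ⊕ ⋯ ⊕ V_s` be a stratified real Lie algebra of step `s ≥ 2`
and `𝔤³ = [𝔤,[𝔤,𝔤]]` the third term of its lower central series.  Then `𝔤/𝔤³` is a stratified
Lie algebra of step 2 with strata the images of `V₁` and `V₂`, and `𝔤` is hypergenerated of
order `k` if and only if `𝔤/𝔤³` is hypergenerated of order `k`. -/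
theorem hypergenerated_iff_quotient_lcs3 {L : Type*} [LieRing L] [LieAlgebra ℝ L]
    [FiniteDimensional ℝ L] (V : ℕ → Submodule ℝ L) (s : ℕ) (hs : 2 ≤ s)
    (hst : IsStratification L V s) (k : ℕ) :
    IsStratification (L ⧸ LieModule.lowerCentralSeries ℝ L L 2)
        (fun i => (V i).map
          (LieSubmodule.Quotient.mk' (LieModule.lowerCentralSeries ℝ L L 2)).toLinearMap) 2 ∧
      (IsHypergenerated L V k ↔
        IsHypergenerated (L ⧸ LieModule.lowerCentralSeries ℝ L L 2)
          (fun i => (V i).map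
            (LieSubmodule.Quotient.mk' (LieModule.lowerCentralSeries ℝ L L 2)).toLinearMap) k) :=
  hypergenerated_iff_quotient_lcs3_general V s hs hst k
end

section
/- Let 𝔤 = V₁ ⊕ ⋯ ⊕ V_s be a stratified real Lie algebra that is hypergenerated of order k, and let 𝔥 be a proper homogeneous ideal of 𝔤, i.e. an ideal with [𝔥,𝔤] ⊆ 𝔥 and 𝔥 = (V₁ ∩ 𝔥) ⊕ ⋯ ⊕ (V_s ∩ 𝔥), 𝔥 ≠ 𝔤. Then the quotient Lie algebra 𝔤/𝔥, with the stratification whose i-th stratum is the image (V_i + 𝔥)/𝔥, is hypergenerated of order k. -/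
/-- In a finite-dimensional space, any submodule contains a submodule of any smaller finrank. -/
lemma exists_le_finrank_eq' {K M : Type*} [Field K] [AddCommGroup M] [Module K M]
    [FiniteDimensional K M] (Q : Submodule K M) {n : ℕ} (hn : n ≤ Module.finrank K Q) :
    ∃ Q' : Submodule K M, Q' ≤ Q ∧ Module.finrank K Q' = n := by
  classical
  let b := Module.finBasis K Q
  let v : Fin n → M := fun i => (b (Fin.castLE hn i) : M)
  have hli : LinearIndependent K v := by
    have h1 : LinearIndependent K fun i : Fin n => b (Fin.castLE hn i) :=
      b.linearIndependent.comp _ (Fin.castLE_injective hn)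
    exact h1.map' Q.subtype (Submodule.ker_subtype Q)
  refine ⟨Submodule.span K (Set.range v), ?_, ?_⟩
  · rw [Submodule.span_le]
    rintro x ⟨i, rfl⟩
    exact (b (Fin.castLE hn i)).2
  · rw [finrank_span_eq_card hli, Fintype.card_fin]

/-- Rank-nullity for the image of a submodule. -/
lemma finrank_map_add_finrank_inf_ker' {K M N : Type*} [Field K] [AddCommGroup M] [Module K M]
    [AddCommGroup N] [Module K N] [FiniteDimensional K M]
    (f : M →ₗ[K] N) (Q : Submodule K M) :
    Module.finrank K (Q.map f) + Module.finrank K (Q ⊓ LinearMap.ker f : Submodule K M)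
      = Module.finrank K Q := by
  have h := LinearMap.finrank_range_add_finrank_ker (f.comp Q.subtype)
  rw [LinearMap.range_comp, Submodule.range_subtype, LinearMap.ker_comp] at h
  rwa [show Module.finrank K (Submodule.comap Q.subtype (LinearMap.ker f))
      = Module.finrank K (Q ⊓ LinearMap.ker f : Submodule K M) by
    rw [← Submodule.map_comap_subtype, Submodule.finrank_map_subtype_eq]] at h

/-- Let `𝔤 = V₁ ⊕ ⋯ ⊕ V_s` be a stratified real Lie algebra that is
hypergenerated of order `k` and let `𝔥` be a proper homogeneous ideal of `𝔤`, i.e. an ideal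
with `𝔥 = (V₁ ∩ 𝔥) ⊕ ⋯ ⊕ (V_s ∩ 𝔥)` and `𝔥 ≠ 𝔤`.  Then the quotient `𝔤/𝔥`, with strata the
images `(V_i + 𝔥)/𝔥`, is hypergenerated of order `k`. -/
theorem quotient_isHypergenerated {L : Type*} [LieRing L] [LieAlgebra ℝ L]
    [FiniteDimensional ℝ L] (V : ℕ → Submodule ℝ L) (s k : ℕ)
    (hst : IsStratification L V s) (hhyp : IsHypergenerated L V k)
    (𝔥 : LieIdeal ℝ L)
    (hhom : LieSubmodule.toSubmodule 𝔥 =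
      ⨆ i ∈ Finset.Icc 1 s, (V i ⊓ LieSubmodule.toSubmodule 𝔥))
    (hproper : 𝔥 ≠ ⊤) :
    IsHypergenerated (L ⧸ 𝔥)
      (fun i => (V i).map (LieSubmodule.Quotient.mk' 𝔥).toLinearMap) k := by
  intro P hP1 hPr
  set fl := (LieSubmodule.Quotient.mk' 𝔥).toLinearMap with hfl
  simp only at hP1 hPr
  -- pull back P
  set Q : Submodule ℝ L := V 1 ⊓ P.comap fl with hQ
  have hQmap : Q.map fl = P := by
    apply le_antisymm
    · exact (Submodule.map_le_iff_le_comap).2 inf_le_right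
    · intro x hx
      obtain ⟨v, hv, rfl⟩ := hP1 hx
      exact ⟨v, ⟨hv, hx⟩, rfl⟩
  have hQker : Q ⊓ LinearMap.ker fl = V 1 ⊓ LinearMap.ker fl := by
    apply le_antisymm
    · exact inf_le_inf_right _ (inf_le_left)
    · rintro v ⟨hv1, hvk⟩
      refine ⟨⟨hv1, ?_⟩, hvk⟩
      have : fl v = 0 := (LinearMap.mem_ker).1 hvk
      show fl v ∈ P
      rw [this]
      exact P.zero_mem
  have h1 := finrank_map_add_finrank_inf_ker' fl (V 1)
  have h2 := finrank_map_add_finrank_inf_ker' fl Q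
  rw [hQmap, hQker] at h2
  have hle : Module.finrank ℝ (V 1) - k ≤ Module.finrank ℝ Q := by omega
  obtain ⟨Q', hQ'le, hQ'r⟩ := exists_le_finrank_eq' Q hle
  have hcomm := hhyp Q' (hQ'le.trans inf_le_left) hQ'r
  -- the subalgebra of elements mapping into lieSpan P
  have hbr : ∀ x y : L, fl ⁅x, y⁆ = ⁅fl x, fl y⁆ := fun x y => rfl
  set KP := LieSubalgebra.lieSpan ℝ (L ⧸ 𝔥) (P : Set (L ⧸ 𝔥)) with hKP
  let K : LieSubalgebra ℝ L :=
    { Submodule.comap fl KP.toSubmodule with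
      lie_mem' := fun {x y} hx hy => by
        exact KP.lie_mem hx hy }
  have hKle : LieSubalgebra.lieSpan ℝ L (Q' : Set L) ≤ K := by
    apply LieSubalgebra.lieSpan_le.2
    intro x hx
    show fl x ∈ KP.toSubmodule
    apply LieSubalgebra.subset_lieSpan
    rw [← hQmap]
    exact ⟨x, hQ'le hx, rfl⟩
  -- now the main chain
  intro z hz
  rw [commutatorSubmodule, bracketSpan] at hz
  have hsub : {w : L ⧸ 𝔥 | ∃ x ∈ (⊤ : Submodule ℝ (L ⧸ 𝔥)), ∃ y ∈ (⊤ : Submodule ℝ (L ⧸ 𝔥)),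
      ⁅x, y⁆ = w} ⊆ (KP.toSubmodule : Set (L ⧸ 𝔥)) := by
    rintro w ⟨x, -, y, -, rfl⟩
    obtain ⟨a, rfl⟩ := LieSubmodule.Quotient.surjective_mk' 𝔥 x
    obtain ⟨b, rfl⟩ := LieSubmodule.Quotient.surjective_mk' 𝔥 y
    have hab : ⁅a, b⁆ ∈ commutatorSubmodule L :=
      Submodule.subset_span ⟨a, trivial, b, trivial, rfl⟩
    exact hKle (hcomm hab)
  exact Submodule.span_le.2 hsub hz
end
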